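/- Let Y be a nondegenerate random variable and X a random vector with ν(Y,X) = 1, where ν(Y,X) = ∫ Var(E[1{Y>t}|X])/Var(1{Y>t}) dμ̃(t). Then there exists a measurable function f with Y = f(X) almost surely. -/

import Mathlib

open MeasureTheory ProbabilityTheory Classical

noncomputable section

/-- The indicator of the event `{Y > t}`. -/
def indGT {Ω : Type*} (Y : Ω → ℝ) (t : ℝ) : Ω → ℝ := fun ω => if Y ω > t then 1 else 0

/-- The (topological) support of a measure on `ℝ`: points all of whose neighbourhoods
have positive measure. -/
def msupport (ρ : Measure ℝ) : Set ℝ :=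
  {x | ∀ ε > (0 : ℝ), ρ (Set.Ioo (x - ε) (x + ε)) ≠ 0}

/-- `S̃`: the support with its maximum removed, if the support attains a maximum. -/
def tildeSet (ρ : Measure ℝ) : Set ℝ :=
  if h : ∃ m, IsGreatest (msupport ρ) m then msupport ρ \ {h.choose} else msupport ρ

/-- `μ̃`: the law `ρ` restricted to `S̃` and renormalized. -/
def tildeMeasure (ρ : Measure ℝ) : Measure ℝ :=
  (ρ (tildeSet ρ))⁻¹ • ρ.restrict (tildeSet ρ)

/-- The dependence measure
`ν(Y, X) = ∫ Var(E[1{Y > t} | X]) / Var(1{Y > t}) dμ̃(t)`,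
where the integrand is defined to be `1` whenever `Var(1{Y > t}) = 0`. -/
def nu {Ω : Type*} [MeasurableSpace Ω] (μ : Measure Ω) (Y : Ω → ℝ)
    {E : Type*} [MeasurableSpace E] (X : Ω → E) : ℝ :=
  ∫ t, (if variance (indGT Y t) μ = 0 then 1
        else variance (μ[indGT Y t | MeasurableSpace.comap X inferInstance]) μ
              / variance (indGT Y t) μ)
    ∂ tildeMeasure (Measure.map Y μ)

end

/-! By the law of total variance, `Var E[1{Y>t} | X] ≤ Var 1{Y>t}`, so the integrand of `ν` is at
most `1` and `ν = 1` forces equality for `μ̃`-a.e. `t`; equality of the variances means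
`1{Y>t} = E[1{Y>t} | X]` a.s., i.e. `{Y > t}` is a.s. an event `X ∈ B_t`. Off the support and at
its maximum this is trivial, so it holds for a.e. level `t` of the law of `Y`. A countable set `D`
of such levels approximates a.e. value of `Y` from the right (a dense part plus the countably many
right-isolated levels), and then `Y = f(X)` a.s. for `f(x) = inf {d ∈ D | x ∉ B_d}`. -/

open Set Filter Topology

section TotalVariance

variable {Ω : Type*} {m m₀ : MeasurableSpace Ω} {μ : Measure[m₀] Ω} [IsProbabilityMeasure μ]
  {φ : Ω → ℝ}

lemma variance_condExp_add_integral_sq_sub_condExp (hm : m ≤ m₀) (hφ : MemLp φ 2 μ) :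
    Var[μ[φ|m]; μ] + ∫ ω, (φ ω - μ[φ|m] ω) ^ 2 ∂μ = Var[φ; μ] := by
  rw [← integral_condVar_add_variance_condExp hm hφ, condVar, integral_condExp hm, add_comm]
  rfl

lemma variance_condExp_le (hm : m ≤ m₀) (hφ : MemLp φ 2 μ) : Var[μ[φ|m]; μ] ≤ Var[φ; μ] := by
  rw [← variance_condExp_add_integral_sq_sub_condExp hm hφ]
  exact le_add_of_nonneg_right (integral_nonneg fun ω => sq_nonneg _)

lemma ae_eq_condExp_of_variance_condExp_eq (hm : m ≤ m₀) (hφ : MemLp φ 2 μ)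
    (h : Var[μ[φ|m]; μ] = Var[φ; μ]) : φ =ᵐ[μ] μ[φ|m] := by
  have hzero : ∫ ω, (φ ω - μ[φ|m] ω) ^ 2 ∂μ = 0 := by
    linarith [variance_condExp_add_integral_sq_sub_condExp hm hφ]
  have hint : Integrable (fun ω => (φ ω - μ[φ|m] ω) ^ 2) μ :=
    (hφ.sub (hφ.condExp one_le_two)).integrable_sq
  filter_upwards [(integral_eq_zero_iff_of_nonneg (fun ω => sq_nonneg _) hint).1 hzero]
    with ω hω
  exact sub_eq_zero.1 (pow_eq_zero_iff two_ne_zero |>.1 hω)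

end TotalVariance

section RealLine

lemma exists_countable_subset_inter_Ico_nonempty (G : Set ℝ) :
    ∃ D ⊆ G, D.Countable ∧ ∀ y ∈ G, ∀ ε > 0, (D ∩ Ico y (y + ε)).Nonempty := by
  obtain ⟨D₀, hD₀G, hD₀c, hD₀d⟩ :=
    (TopologicalSpace.IsSeparable.of_separableSpace G).exists_countable_dense_subset
  -- `D₀` misses only the points of `G` isolated from the right in `G`, which are countable.
  refine ⟨D₀ ∪ {x ∈ G | 𝓝[G ∩ Ioi x] x = ⊥}, union_subset hD₀G (sep_subset _ _),
    hD₀c.union countable_setOfPred_isolated_right_within, fun y hy ε hε => ?_⟩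
  by_cases hiso : 𝓝[G ∩ Ioi y] y = ⊥
  · exact ⟨y, Or.inr ⟨hy, hiso⟩, left_mem_Ico.2 (by linarith)⟩
  · have := NeBot.mk hiso
    obtain ⟨g, ⟨hgG, hyg⟩, hgε⟩ := nonempty_of_mem (f := 𝓝[G ∩ Ioi y] y)
      (inter_mem_nhdsWithin _ (Iio_mem_nhds (by linarith : y < y + ε)))
    obtain ⟨d, hd, hdD₀⟩ := mem_closure_iff.1 (hD₀d hgG) (Ioo y (y + ε)) isOpen_Ioo ⟨hyg, hgε⟩
    exact ⟨d, Or.inl hdD₀, Ioo_subset_Ico_self hd⟩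

lemma EReal.iInf_ite_lt_eq_coe {D : Set ℝ} {y : ℝ}
    (h : ∀ ε > 0, (D ∩ Ico y (y + ε)).Nonempty) :
    ⨅ d : D, (if (d : ℝ) < y then ⊤ else ((d : ℝ) : EReal)) = y := by
  refine le_antisymm (le_of_forall_gt_imp_ge_of_dense fun z hz => ?_)
    (le_iInf fun d => ?_)
  · obtain ⟨r, hyr, hrz⟩ := EReal.lt_iff_exists_real_btwn.1 hz
    obtain ⟨d, hdD, hyd, hdr⟩ := h (r - y) (by exact_mod_cast sub_pos.2 hyr)
    calc ⨅ d : D, (if (d : ℝ) < y then ⊤ else ((d : ℝ) : EReal))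
        ≤ if d < y then ⊤ else (d : EReal) := iInf_le_of_le ⟨d, hdD⟩ le_rfl
      _ = d := if_neg (not_lt.2 hyd)
      _ ≤ z := (EReal.coe_le_coe_iff.2 (by linarith)).trans hrz.le
  · split_ifs with hd
    · exact le_top
    · exact EReal.coe_le_coe_iff.2 (not_lt.1 hd)

lemma msupport_eq_support (ρ : Measure ℝ) : msupport ρ = ρ.support := by
  ext x
  rw [Metric.nhds_basis_ball.mem_measureSupport]
  simp [msupport, Real.ball_eq_Ioo, pos_iff_ne_zero]

lemma ae_mem_msupport (ρ : Measure ℝ) : ∀ᵐ y ∂ρ, y ∈ msupport ρ := by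
  rw [msupport_eq_support]
  exact Measure.support_mem_ae

lemma ae_le_of_isGreatest_msupport {ρ : Measure ℝ} {M : ℝ} (hM : IsGreatest (msupport ρ) M) :
    ∀ᵐ y ∂ρ, y ≤ M := by
  filter_upwards [ae_mem_msupport ρ] with y hy using hM.2 hy

lemma ae_of_ae_restrict_tildeSet {ρ : Measure ℝ} {P : ℝ → Prop}
    (h : ∀ᵐ t ∂ρ.restrict (tildeSet ρ), P t) (hmax : ∀ M, IsGreatest (msupport ρ) M → P M) :
    ∀ᵐ t ∂ρ, P t := by
  filter_upwards [ae_mem_msupport ρ, ae_imp_of_ae_restrict h] with t ht hS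
  unfold tildeSet at hS
  split_ifs at hS with hex
  · by_cases htM : t = hex.choose
    · exact htM ▸ hmax _ hex.choose_spec
    · exact hS ⟨ht, htM⟩
  · exact hS ht

lemma isProbabilityMeasure_tildeMeasure {ρ : Measure ℝ} [IsFiniteMeasure ρ]
    (h : tildeMeasure ρ ≠ 0) : IsProbabilityMeasure (tildeMeasure ρ) := by
  have hS : ρ (tildeSet ρ) ≠ 0 := fun h0 =>
    h (by simp [tildeMeasure, Measure.restrict_eq_zero.2 h0])
  constructor
  simp [tildeMeasure, ENNReal.inv_mul_cancel hS (measure_ne_top _ _)]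

lemma ae_restrict_tildeSet_of_ae_tildeMeasure {ρ : Measure ℝ} [IsFiniteMeasure ρ]
    {P : ℝ → Prop} (h : ∀ᵐ t ∂tildeMeasure ρ, P t) : ∀ᵐ t ∂ρ.restrict (tildeSet ρ), P t :=
  (Measure.ae_ennreal_smul_measure_iff (ENNReal.inv_ne_zero.2 (measure_ne_top _ _))).1 h

end RealLine

def determinedLevels {Ω E : Type*} [MeasurableSpace Ω] [MeasurableSpace E] (μ : Measure Ω)
    (Y : Ω → ℝ) (X : Ω → E) : Set ℝ :=
  {t | ∃ B, MeasurableSet B ∧ ∀ᵐ ω ∂μ, (t < Y ω ↔ X ω ∈ B)}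

noncomputable def nuIntegrand {Ω E : Type*} [MeasurableSpace Ω] [MeasurableSpace E]
    (μ : Measure Ω) (Y : Ω → ℝ) (X : Ω → E) (t : ℝ) : ℝ :=
  if variance (indGT Y t) μ = 0 then 1
  else variance (μ[indGT Y t | MeasurableSpace.comap X inferInstance]) μ
        / variance (indGT Y t) μ

section Levels

variable {Ω E : Type*} [MeasurableSpace Ω] [MeasurableSpace E] {μ : Measure Ω}
  {Y : Ω → ℝ} {X : Ω → E}

lemma mem_determinedLevels_of_ae_le {t : ℝ} (h : ∀ᵐ ω ∂μ, Y ω ≤ t) :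
    t ∈ determinedLevels μ Y X :=
  ⟨∅, MeasurableSet.empty, h.mono fun ω hω => by simpa using hω⟩

lemma mem_determinedLevels_of_ae_eq {t : ℝ} {g : Ω → ℝ}
    (hg : Measurable[MeasurableSpace.comap X inferInstance] g) (h : indGT Y t =ᵐ[μ] g) :
    t ∈ determinedLevels μ Y X := by
  obtain ⟨B, hB, hBg⟩ := hg (measurableSet_singleton 1)
  refine ⟨B, hB, h.mono fun ω hω => ?_⟩
  rw [← mem_preimage (f := X), hBg, mem_preimage, mem_singleton_iff, ← hω, indGT]
  split_ifs <;> simp_all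

lemma exists_measurable_comp_ae_eq {D : Set ℝ} (hD : D.Countable)
    (hDY : D ⊆ determinedLevels μ Y X)
    (happrox : ∀ᵐ ω ∂μ, ∀ ε > 0, (D ∩ Ico (Y ω) (Y ω + ε)).Nonempty) :
    ∃ f : E → ℝ, Measurable f ∧ Y =ᵐ[μ] fun ω => f (X ω) := by
  have := hD.to_subtype
  choose B hB hBY using fun d : D => hDY d.2
  -- `Y = inf {d ∈ D | Y ≤ d}` a.s., and `{Y ≤ d}` is read off `X` through `B d`.
  refine ⟨fun x => (⨅ d : D, if x ∈ B d then ⊤ else ((d : ℝ) : EReal)).toReal,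
    (Measurable.iInf fun d => Measurable.ite (hB d) measurable_const measurable_const).ereal_toReal,
    ?_⟩
  filter_upwards [ae_all_iff.2 hBY, happrox] with ω hBω hω
  simp_rw [← hBω, EReal.iInf_ite_lt_eq_coe hω, EReal.toReal_coe]

lemma memLp_indGT [IsFiniteMeasure μ] (hY : Measurable Y) (t : ℝ) : MemLp (indGT Y t) 2 μ :=
  memLp_indicator_const 2 (hY measurableSet_Ioi) 1 (Or.inr (measure_ne_top _ _))

end Levels

section Integrand

variable {Ω E : Type*} [MeasurableSpace Ω] [MeasurableSpace E] {μ : Measure Ω}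
  [IsProbabilityMeasure μ] {Y : Ω → ℝ} {X : Ω → E}

lemma nuIntegrand_le_one (hY : Measurable Y) (hX : Measurable X) (t : ℝ) :
    nuIntegrand μ Y X t ≤ 1 := by
  unfold nuIntegrand
  split_ifs
  · exact le_rfl
  · exact div_le_one_of_le₀ (variance_condExp_le hX.comap_le (memLp_indGT hY t))
      (variance_nonneg _ _)

lemma mem_determinedLevels_of_nuIntegrand_eq_one (hY : Measurable Y) (hX : Measurable X)
    {t : ℝ} (h : nuIntegrand μ Y X t = 1) : t ∈ determinedLevels μ Y X := by
  have hvar : variance (μ[indGT Y t | MeasurableSpace.comap X inferInstance]) μ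
      = variance (indGT Y t) μ := by
    unfold nuIntegrand at h
    split_ifs at h with h0
    · exact le_antisymm (variance_condExp_le hX.comap_le (memLp_indGT hY t))
        (h0.trans_le (variance_nonneg _ _))
    · exact (div_eq_one_iff_eq h0).1 h
  exact mem_determinedLevels_of_ae_eq stronglyMeasurable_condExp.measurable
    (ae_eq_condExp_of_variance_condExp_eq hX.comap_le (memLp_indGT hY t) hvar)

lemma ae_mem_determinedLevels_of_nu_eq_one (hY : Measurable Y) (hX : Measurable X)
    (hnu : nu μ Y X = 1) : ∀ᵐ t ∂μ.map Y, t ∈ determinedLevels μ Y X := by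
  have hne : tildeMeasure (μ.map Y) ≠ 0 := fun h0 => by simp [nu, h0] at hnu
  have := isProbabilityMeasure_tildeMeasure hne
  change ∫ t, nuIntegrand μ Y X t ∂tildeMeasure (μ.map Y) = 1 at hnu
  have hint : Integrable (nuIntegrand μ Y X) (tildeMeasure (μ.map Y)) := by
    by_contra h
    simp [integral_undef h] at hnu
  have hone : ∀ᵐ t ∂tildeMeasure (μ.map Y), nuIntegrand μ Y X t = 1 :=
    (integral_eq_iff_of_ae_le hint (integrable_const 1)
      (ae_of_all _ (nuIntegrand_le_one hY hX))).1 (by simpa using hnu)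
  refine ae_of_ae_restrict_tildeSet (ae_restrict_tildeSet_of_ae_tildeMeasure
    (hone.mono fun t => mem_determinedLevels_of_nuIntegrand_eq_one hY hX)) fun M hM => ?_
  exact mem_determinedLevels_of_ae_le
    (ae_of_ae_map hY.aemeasurable (ae_le_of_isGreatest_msupport hM))

end Integrand

theorem stmt_6_general {Ω : Type*} [MeasurableSpace Ω] (μ : Measure Ω) [IsProbabilityMeasure μ]
    {p : ℕ} (Y : Ω → ℝ) (X : Ω → EuclideanSpace ℝ (Fin p))
    (hY : Measurable Y) (hX : Measurable X)
    (hnu : nu μ Y X = 1) :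
    ∃ f : EuclideanSpace ℝ (Fin p) → ℝ, Measurable f ∧ Y =ᵐ[μ] fun ω => f (X ω) := by
  obtain ⟨D, hDG, hDc, hD⟩ := exists_countable_subset_inter_Ico_nonempty (determinedLevels μ Y X)
  exact exists_measurable_comp_ae_eq hDc hDG
    (ae_of_ae_map hY.aemeasurable ((ae_mem_determinedLevels_of_nu_eq_one hY hX hnu).mono hD))

/-- If `Y` is nondegenerate and `ν(Y,X) = 1`, then `Y` is a.s. a measurable function
of `X`. -/
theorem stmt_6 {Ω : Type*} [MeasurableSpace Ω] (μ : Measure Ω) [IsProbabilityMeasure μ]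
    {p : ℕ} (Y : Ω → ℝ) (X : Ω → EuclideanSpace ℝ (Fin p))
    (hY : Measurable Y) (hX : Measurable X)
    (hconst : ¬ ∃ c : ℝ, ∀ᵐ ω ∂μ, Y ω = c)
    (hnu : nu μ Y X = 1) :
    ∃ f : EuclideanSpace ℝ (Fin p) → ℝ, Measurable f ∧ Y =ᵐ[μ] fun ω => f (X ω) :=
  stmt_6_general μ Y X hY hX hnu
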